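/- arXiv:2507.21185 — 3 statements merged into one kernel-verified Lean document; each statement's English description precedes it below -/
import Mathlib

section
/- (G-fractional hidden convexity) Let G be an N-function satisfying (H4), and let 1 < q ≤ p⁻. For every pair of nonnegative functions u₀, u₁ : ℝ^N → [0,∞), define σ_t(x) = [(1−t) u₀(x)^q + t u₁(x)^q]^{1/q} for t ∈ [0,1] and x ∈ ℝ^N. Then for all t ∈ [0,1] and all x, y ∈ ℝ^N: G(|σ_t(x) − σ_t(y)|) ≤ (1−t) G(|u₀(x) − u₀(y)|) + t G(|u₁(x) − u₁(y)|). -/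
/-!
With `φ u = G (u ^ (1 / q))`, (H4) and `q ≤ p⁻` give `s g'(s) ≥ (q - 1) g(s)`, so `g(s) / s^(q-1)`
is nondecreasing; since `φ'(u) = (1 / q) g(v) / v^(q-1)` with `v = u^(1/q)`, `φ` is convex on
`[0, ∞)`. Minkowski's inequality in weighted `ℓ^q` bounds `|σ_t(x) - σ_t(y)|` by the `q`-mean of
`|u₀ x - u₀ y|` and `|u₁ x - u₁ y|`. As `G` is nondecreasing, `G` of that mean is `φ` of a convex
combination of `|u₀ x - u₀ y|^q` and `|u₁ x - u₁ y|^q`, and convexity of `φ` concludes.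
-/

open MeasureTheory Filter Set

noncomputable section

abbrev Euc (N : ℕ) := EuclideanSpace ℝ (Fin N)

def IsNFunction (G : ℝ → ℝ) : Prop :=
  ContinuousOn G (Set.Ici 0) ∧ ConvexOn ℝ (Set.Ici 0) G ∧
  (∀ t : ℝ, 0 ≤ t → (G t = 0 ↔ t = 0)) ∧
  Tendsto (fun t => G t / t) (nhdsWithin 0 (Set.Ioi 0)) (nhds 0) ∧
  Tendsto (fun t => G t / t) atTop atTop

open scoped Topology

namespace IsNFunction

variable {G : ℝ → ℝ}

theorem map_zero (hG : IsNFunction G) : G 0 = 0 :=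
  (hG.2.2.1 0 le_rfl).mpr rfl

/-- Secant slopes from `0` increase by convexity and tend to `0` at `0⁺`, so they are `≥ 0`. -/
theorem nonneg (hG : IsNFunction G) {s : ℝ} (hs : 0 ≤ s) : 0 ≤ G s := by
  obtain rfl | hs := hs.eq_or_lt
  · exact hG.map_zero.ge
  have hslope : ∀ᶠ z in 𝓝[>] 0, G z / z ≤ G s / s := by
    filter_upwards [Ioo_mem_nhdsGT hs] with z ⟨hz, hzs⟩
    simpa [hG.map_zero] using hG.2.1.secant_mono (a := 0) self_mem_Ici hz.le hs.le
      hz.ne' hs.ne' hzs.le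
  have := le_of_tendsto hG.2.2.2.1 hslope
  simpa using (le_div_iff₀ hs).mp this

theorem pos (hG : IsNFunction G) {s : ℝ} (hs : 0 < s) : 0 < G s :=
  (hG.nonneg hs.le).lt_of_ne fun h => hs.ne' ((hG.2.2.1 s hs.le).mp h.symm)

theorem monotoneOn (hG : IsNFunction G) : MonotoneOn G (Ici 0) := by
  intro x hx y hy hxy
  obtain rfl | hx := (mem_Ici.mp hx).eq_or_lt
  · rw [hG.map_zero]
    exact hG.nonneg hy
  · exact hG.2.1.le_right_of_left_le'' self_mem_Ici hy hx hxy
      (by rw [hG.map_zero]; exact hG.nonneg hx.le)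

theorem deriv_pos (hG : IsNFunction G) {s g : ℝ} (hs : 0 < s) (hGg : HasDerivAt G g s) :
    0 < g := by
  have := hG.2.1.slope_le_of_hasDerivAt self_mem_Ici hs.le hs hGg
  rw [slope_def_field, hG.map_zero] at this
  exact (div_pos (hG.pos hs) hs).trans_le (by simpa using this)

end IsNFunction

theorem monotoneOn_div_rpow_of_mul_le_mul_deriv {g g' : ℝ → ℝ} {r : ℝ}
    (hg : ∀ s, 0 < s → HasDerivAt g (g' s) s) (h : ∀ s, 0 < s → r * g s ≤ s * g' s) :
    MonotoneOn (fun s => g s / s ^ r) (Ioi 0) := by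
  have hderiv : ∀ s, 0 < s → HasDerivAt (fun s => g s / s ^ r)
      ((g' s * s ^ r - g s * (r * s ^ (r - 1))) / (s ^ r) ^ 2) s := fun s hs =>
    (hg s hs).div (Real.hasDerivAt_rpow_const (Or.inl hs.ne')) (Real.rpow_pos_of_pos hs r).ne'
  refine monotoneOn_of_hasDerivWithinAt_nonneg (convex_Ioi 0)
    (fun s hs => (hderiv s hs).continuousAt.continuousWithinAt)
    (fun s hs => (hderiv s (interior_subset hs)).hasDerivWithinAt) fun s hs => ?_
  rw [interior_Ioi, mem_Ioi] at hs
  have hnum : g' s * s ^ r - g s * (r * s ^ (r - 1)) = s ^ (r - 1) * (s * g' s - r * g s) := by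
    rw [Real.rpow_sub_one hs.ne']
    field_simp
  rw [hnum]
  exact div_nonneg (mul_nonneg (Real.rpow_nonneg hs.le _) (sub_nonneg.mpr (h s hs))) (sq_nonneg _)

theorem convexOn_comp_rpow_inv {G g : ℝ → ℝ} {q : ℝ} (hq : 0 < q)
    (hG : ContinuousOn G (Ici 0)) (hGg : ∀ s, 0 < s → HasDerivAt G (g s) s)
    (hg : MonotoneOn (fun s => g s / s ^ (q - 1)) (Ioi 0)) :
    ConvexOn ℝ (Ici 0) (fun u => G (u ^ (1 / q))) := by
  have hderiv : ∀ u, 0 < u → HasDerivAt (fun u => G (u ^ (1 / q)))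
      (1 / q * (g (u ^ (1 / q)) / (u ^ (1 / q)) ^ (q - 1))) u := by
    intro u hu
    refine ((hGg _ (Real.rpow_pos_of_pos hu (1 / q))).comp u
      (Real.hasDerivAt_rpow_const (p := 1 / q) (Or.inl hu.ne'))).congr_deriv ?_
    have hexp : 1 / q - 1 = -(1 / q * (q - 1)) := by field_simp; ring
    rw [← Real.rpow_mul hu.le, hexp, Real.rpow_neg hu.le]
    ring
  refine MonotoneOn.convexOn_of_deriv (convex_Ici 0)
    (hG.comp (Real.continuous_rpow_const (by positivity)).continuousOn
      fun u hu => Real.rpow_nonneg hu _)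
    (fun u hu => (hderiv u (interior_Ici.subset hu)).differentiableAt.differentiableWithinAt) ?_
  rw [interior_Ici]
  intro u hu v hv huv
  rw [(hderiv u hu).deriv, (hderiv v hv).deriv]
  gcongr 1 / q * ?_
  exact hg (Real.rpow_pos_of_pos hu _) (Real.rpow_pos_of_pos hv _)
    (Real.rpow_le_rpow hu.le huv (by positivity))

/-- `σ_t(x) = powMean q t (u₀ x) (u₁ x)`. -/
def powMean (q t a c : ℝ) : ℝ := ((1 - t) * a ^ q + t * c ^ q) ^ (1 / q)

section powMean

variable {q t : ℝ}

/-- Minkowski's inequality in `ℓ^q` of two points, applied to `((1 - t)^{1/q} a, t^{1/q} c)`. -/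
theorem powMean_add_le (hq : 1 ≤ q) (ht₀ : 0 ≤ t) (ht₁ : t ≤ 1) {a c b d : ℝ} (ha : 0 ≤ a)
    (hc : 0 ≤ c) (hb : 0 ≤ b) (hd : 0 ≤ d) :
    powMean q t (a + b) (c + d) ≤ powMean q t a c + powMean q t b d := by
  have hw : 0 ≤ 1 - t := by linarith
  have hscale : ∀ w z : ℝ, 0 ≤ w → 0 ≤ z → (w ^ (1 / q) * z) ^ q = w * z ^ q := fun w z hw hz => by
    rw [Real.mul_rpow (by positivity) hz, one_div, Real.rpow_inv_rpow hw (by positivity)]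
  have hL := Real.Lp_add_le_of_nonneg (s := Finset.univ) hq
    (f := ![(1 - t) ^ (1 / q) * a, t ^ (1 / q) * c])
    (g := ![(1 - t) ^ (1 / q) * b, t ^ (1 / q) * d])
    (by intro i _; fin_cases i <;> simp <;> positivity)
    (by intro i _; fin_cases i <;> simp <;> positivity)
  simp only [Fin.sum_univ_two, Matrix.cons_val_zero, Matrix.cons_val_one, ← mul_add] at hL
  rwa [hscale _ _ hw (by positivity), hscale _ _ ht₀ (by positivity), hscale _ _ hw ha,
    hscale _ _ ht₀ hc, hscale _ _ hw hb, hscale _ _ ht₀ hd] at hL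

theorem powMean_le_powMean (hq : 0 < q) (ht₀ : 0 ≤ t) (ht₁ : t ≤ 1) {a c b d : ℝ} (ha : 0 ≤ a)
    (hc : 0 ≤ c) (hab : a ≤ b) (hcd : c ≤ d) : powMean q t a c ≤ powMean q t b d := by
  have hw : 0 ≤ 1 - t := by linarith
  unfold powMean
  gcongr

theorem powMean_le_add_powMean_abs_sub (hq : 1 ≤ q) (ht₀ : 0 ≤ t) (ht₁ : t ≤ 1) {a c b d : ℝ}
    (ha : 0 ≤ a) (hc : 0 ≤ c) (hb : 0 ≤ b) (hd : 0 ≤ d) :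
    powMean q t a c ≤ powMean q t b d + powMean q t |a - b| |c - d| :=
  (powMean_le_powMean (by linarith) ht₀ ht₁ ha hc (le_add_of_sub_left_le (le_abs_self _))
    (le_add_of_sub_left_le (le_abs_self _))).trans
    (powMean_add_le hq ht₀ ht₁ hb hd (abs_nonneg _) (abs_nonneg _))

theorem abs_powMean_sub_powMean_le (hq : 1 ≤ q) (ht₀ : 0 ≤ t) (ht₁ : t ≤ 1) {a c b d : ℝ}
    (ha : 0 ≤ a) (hc : 0 ≤ c) (hb : 0 ≤ b) (hd : 0 ≤ d) :
    |powMean q t a c - powMean q t b d| ≤ powMean q t |a - b| |c - d| := by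
  rw [abs_sub_le_iff, sub_le_iff_le_add', sub_le_iff_le_add']
  refine ⟨powMean_le_add_powMean_abs_sub hq ht₀ ht₁ ha hc hb hd, ?_⟩
  rw [abs_sub_comm a, abs_sub_comm c]
  exact powMean_le_add_powMean_abs_sub hq ht₀ ht₁ hb hd ha hc

theorem ConvexOn.map_powMean_le {G : ℝ → ℝ} (hG : ConvexOn ℝ (Ici 0) (fun u => G (u ^ (1 / q))))
    (hq : q ≠ 0) (ht₀ : 0 ≤ t) (ht₁ : t ≤ 1) {a c : ℝ} (ha : 0 ≤ a) (hc : 0 ≤ c) :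
    G (powMean q t a c) ≤ (1 - t) * G a + t * G c := by
  have hroot : ∀ z : ℝ, 0 ≤ z → (z ^ q) ^ (1 / q) = z := fun z hz => by
    rw [one_div, Real.rpow_rpow_inv hz hq]
  have := hG.2 (Real.rpow_nonneg ha q) (Real.rpow_nonneg hc q) (sub_nonneg.mpr ht₁) ht₀
    (sub_add_cancel 1 t)
  simpa only [powMean, smul_eq_mul, hroot a ha, hroot c hc] using this

end powMean

theorem G_fractional_hidden_convexity_general
    {N : ℕ}
    (G g g' : ℝ → ℝ) (pm pp : ℝ) (hG : IsNFunction G)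
    (hGg : ∀ t : ℝ, 0 < t → HasDerivAt G (g t) t)
    (hgg' : ∀ t : ℝ, 0 < t → HasDerivAt g (g' t) t)
    (hH4 : ∀ t : ℝ, 0 < t → pm - 1 ≤ t * g' t / g t ∧ t * g' t / g t ≤ pp - 1)
    (q : ℝ) (hq1 : 1 < q) (hqpm : q ≤ pm)
    (u₀ u₁ : Euc N → ℝ) (hu₀ : ∀ x, 0 ≤ u₀ x) (hu₁ : ∀ x, 0 ≤ u₁ x)
    (t : ℝ) (ht : t ∈ Set.Icc (0:ℝ) 1) (x y : Euc N) :
    G |((1 - t) * u₀ x ^ q + t * u₁ x ^ q) ^ (1 / q)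
        - ((1 - t) * u₀ y ^ q + t * u₁ y ^ q) ^ (1 / q)|
      ≤ (1 - t) * G |u₀ x - u₀ y| + t * G |u₁ x - u₁ y| := by
  obtain ⟨ht₀, ht₁⟩ := ht
  have hq : 0 < q := zero_lt_one.trans hq1
  have hgq : ∀ s, 0 < s → (q - 1) * g s ≤ s * g' s := fun s hs => by
    have hg := hG.deriv_pos hs (hGg s hs)
    exact (mul_le_mul_of_nonneg_right (by linarith) hg.le).trans
      ((le_div_iff₀ hg).mp (hH4 s hs).1)
  have hconv : ConvexOn ℝ (Ici 0) (fun u => G (u ^ (1 / q))) :=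
    convexOn_comp_rpow_inv hq hG.1 hGg (monotoneOn_div_rpow_of_mul_le_mul_deriv hgg' hgq)
  have hσ : |powMean q t (u₀ x) (u₁ x) - powMean q t (u₀ y) (u₁ y)|
      ≤ powMean q t |u₀ x - u₀ y| |u₁ x - u₁ y| :=
    abs_powMean_sub_powMean_le hq1.le ht₀ ht₁ (hu₀ x) (hu₁ x) (hu₀ y) (hu₁ y)
  calc G |powMean q t (u₀ x) (u₁ x) - powMean q t (u₀ y) (u₁ y)|
      ≤ G (powMean q t |u₀ x - u₀ y| |u₁ x - u₁ y|) :=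
        hG.monotoneOn (mem_Ici.mpr (abs_nonneg _)) (mem_Ici.mpr ((abs_nonneg _).trans hσ)) hσ
    _ ≤ (1 - t) * G |u₀ x - u₀ y| + t * G |u₁ x - u₁ y| :=
        hconv.map_powMean_le hq.ne' ht₀ ht₁ (abs_nonneg _) (abs_nonneg _)

/-- G-fractional hidden convexity: if `G` is an N-function satisfying (H4)
(`1 < p⁻ − 1 ≤ t g'(t)/g(t) ≤ p⁺ − 1` for all `t > 0`, `g = G'` of class `C¹` on `(0,∞)`)
and `1 < q ≤ p⁻`, then for nonnegative `u₀, u₁ : ℝ^N → [0,∞)`, the curve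
`σ_t(x) = ((1−t) u₀(x)^q + t u₁(x)^q)^{1/q}` satisfies
`G(|σ_t(x) − σ_t(y)|) ≤ (1−t) G(|u₀(x) − u₀(y)|) + t G(|u₁(x) − u₁(y)|)`. -/
theorem G_fractional_hidden_convexity
    {N : ℕ}
    (G g g' : ℝ → ℝ) (pm pp : ℝ) (hG : IsNFunction G)
    (hGg : ∀ t : ℝ, 0 < t → HasDerivAt G (g t) t)
    (hgg' : ∀ t : ℝ, 0 < t → HasDerivAt g (g' t) t)
    (hg'cont : ContinuousOn g' (Set.Ioi 0))
    (hpm : 1 < pm - 1)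
    (hH4 : ∀ t : ℝ, 0 < t → pm - 1 ≤ t * g' t / g t ∧ t * g' t / g t ≤ pp - 1)
    (q : ℝ) (hq1 : 1 < q) (hqpm : q ≤ pm)
    (u₀ u₁ : Euc N → ℝ) (hu₀ : ∀ x, 0 ≤ u₀ x) (hu₁ : ∀ x, 0 ≤ u₁ x)
    (t : ℝ) (ht : t ∈ Set.Icc (0:ℝ) 1) (x y : Euc N) :
    G |((1 - t) * u₀ x ^ q + t * u₁ x ^ q) ^ (1 / q)
        - ((1 - t) * u₀ y ^ q + t * u₁ y ^ q) ^ (1 / q)|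
      ≤ (1 - t) * G |u₀ x - u₀ y| + t * G |u₁ x - u₁ y| :=
  G_fractional_hidden_convexity_general G g g' pm pp hG hGg hgg' hH4 q hq1 hqpm u₀ u₁ hu₀ hu₁ t ht x
    y
end
end

section
/- Let G be an N-function with derivative g = G' of class C¹ on (0,∞), and let q > 1 satisfy t g'(t)/g(t) ≥ q − 1 for all t > 0. Then the map s ↦ G(s^{1/q}) is convex on [0,∞). -/
open MeasureTheory Filter Set

noncomputable section

/-- if `G` is an N-function with derivative `g = G'` of class `C¹` on `(0,∞)`
and `q > 1` satisfies `t g'(t)/g(t) ≥ q − 1` for all `t > 0`, then `s ↦ G (s^{1/q})`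
is convex on `[0,∞)`. -/
theorem convexity_of_G_rpow_inv_q
    (G g g' : ℝ → ℝ) (hG : IsNFunction G)
    (hGg : ∀ t : ℝ, 0 < t → HasDerivAt G (g t) t)
    (hgg' : ∀ t : ℝ, 0 < t → HasDerivAt g (g' t) t)
    (hg'cont : ContinuousOn g' (Set.Ioi 0))
    (q : ℝ) (hq : 1 < q)
    (hlow : ∀ t : ℝ, 0 < t → q - 1 ≤ t * g' t / g t) :
    ConvexOn ℝ (Set.Ici 0) (fun s : ℝ => G (s ^ (1 / q))) := by
  obtain ⟨hGc, hGconv, hGzero, hGlim0, _⟩ := hG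
  have hq0 : (0:ℝ) < q := by linarith
  have hG0 : G 0 = 0 := (hGzero 0 le_rfl).mpr rfl
  -- slope from 0 is G u / u
  have hslope : ∀ u : ℝ, slope G 0 u = G u / u := by
    intro u; simp [slope_def_field, hG0]
  -- G is nonneg and positive on (0,∞)
  have hGpos : ∀ u : ℝ, 0 < u → 0 < G u := by
    intro u hu
    have hmono := hGconv.slope_mono (x := 0) (Set.mem_Ici.mpr le_rfl)
    have hnn : 0 ≤ G u / u := by
      refine le_of_tendsto hGlim0 ?_
      filter_upwards [Ioo_mem_nhdsGT_of_mem (by exact ⟨le_rfl, hu⟩ : (0:ℝ) ∈ Set.Ico 0 u)]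
        with t ht
      have := hmono ⟨Set.mem_Ici.mpr ht.1.le, by simp [ht.1.ne']⟩
        ⟨Set.mem_Ici.mpr hu.le, by simp [hu.ne']⟩ ht.2.le
      rw [hslope, hslope] at this
      exact this
    have hne : G u ≠ 0 := fun h => (hu.ne' ((hGzero u hu.le).mp h))
    have : 0 ≤ G u := by
      have := mul_nonneg hnn hu.le
      rwa [div_mul_cancel₀ _ hu.ne'] at this
    exact lt_of_le_of_ne this (Ne.symm hne)
  -- g is positive on (0,∞)
  have hgpos : ∀ t : ℝ, 0 < t → 0 < g t := by
    intro t ht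
    have hs := hGconv.slope_le_of_hasDerivAt (Set.mem_Ici.mpr le_rfl)
      (Set.mem_Ici.mpr ht.le) ht (hGg t ht)
    rw [hslope] at hs
    exact lt_of_lt_of_le (div_pos (hGpos t ht) ht) hs
  -- the first derivative
  set F' : ℝ → ℝ := fun s => g (s ^ (1/q)) * (1/q * s ^ (1/q - 1)) with hF'def
  have hF' : ∀ s : ℝ, 0 < s →
      HasDerivAt (fun s : ℝ => G (s ^ (1/q))) (F' s) s := by
    intro s hs
    have h1 : HasDerivAt (fun x : ℝ => x ^ (1/q)) (1/q * s ^ (1/q - 1)) s :=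
      Real.hasDerivAt_rpow_const (Or.inl hs.ne')
    exact HasDerivAt.comp s (hGg (s ^ (1/q)) (Real.rpow_pos_of_pos hs _)) h1
  -- second derivative
  set D : ℝ → ℝ := fun s =>
    g' (s ^ (1/q)) * (1/q * s ^ (1/q - 1)) * (1/q * s ^ (1/q - 1)) +
      g (s ^ (1/q)) * (1/q * ((1/q - 1) * s ^ (1/q - 1 - 1))) with hDdef
  have hD : ∀ s : ℝ, 0 < s → HasDerivAt F' (D s) s := by
    intro s hs
    have h1 : HasDerivAt (fun x : ℝ => x ^ (1/q)) (1/q * s ^ (1/q - 1)) s :=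
      Real.hasDerivAt_rpow_const (Or.inl hs.ne')
    have h2 : HasDerivAt (fun x : ℝ => g (x ^ (1/q)))
        (g' (s ^ (1/q)) * (1/q * s ^ (1/q - 1))) s :=
      HasDerivAt.comp s (hgg' (s ^ (1/q)) (Real.rpow_pos_of_pos hs _)) h1
    have h3 : HasDerivAt (fun x : ℝ => 1/q * x ^ (1/q - 1))
        (1/q * ((1/q - 1) * s ^ (1/q - 1 - 1))) s :=
      (Real.hasDerivAt_rpow_const (Or.inl hs.ne')).const_mul (1/q)
    exact h2.mul h3
  -- nonnegativity of the second derivative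
  have hDnn : ∀ s : ℝ, 0 < s → 0 ≤ D s := by
    intro s hs
    set t := s ^ (1/q) with htdef
    have ht : 0 < t := Real.rpow_pos_of_pos hs _
    have hB : (0:ℝ) < s ^ (1/q - 1 - 1) := Real.rpow_pos_of_pos hs _
    have hAA : s ^ (1/q - 1) * s ^ (1/q - 1) = t * s ^ (1/q - 1 - 1) := by
      rw [htdef, ← Real.rpow_add hs, ← Real.rpow_add hs]
      ring_nf
    have key : (q - 1) * g t ≤ t * g' t :=
      (le_div_iff₀ (hgpos t ht)).mp (hlow t ht)
    have hDE : D s = s ^ (1/q - 1 - 1) * (t * g' t - (q - 1) * g t) / q ^ 2 := by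
      rw [hDdef]
      have hqq : q * q⁻¹ = 1 := mul_inv_cancel₀ hq0.ne'
      linear_combination (g' t / q ^ 2) * hAA +
        (g t * s ^ (1/q - 1 - 1) / q) * hqq
    rw [hDE]
    exact div_nonneg (mul_nonneg hB.le (by linarith)) (by positivity)
  -- F' is monotone on (0,∞)
  have hF'mono : MonotoneOn F' (Set.Ioi 0) := by
    refine monotoneOn_of_deriv_nonneg (convex_Ioi 0) ?_ ?_ ?_
    · exact fun s hs => ((hD s hs).differentiableAt.continuousAt).continuousWithinAt
    · rw [interior_Ioi]
      exact fun s hs => (hD s hs).differentiableAt.differentiableWithinAt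
    · rw [interior_Ioi]
      intro s hs
      rw [(hD s hs).deriv]
      exact hDnn s hs
  -- conclude
  refine MonotoneOn.convexOn_of_deriv (convex_Ici 0) ?_ ?_ ?_
  · refine hGc.comp ?_ ?_
    · intro s hs
      exact (Real.continuousAt_rpow_const s (1/q)
        (Or.inr (by positivity))).continuousWithinAt
    · intro s hs
      exact Set.mem_Ici.mpr (Real.rpow_nonneg (Set.mem_Ici.mp hs) _)
  · rw [interior_Ici]
    exact fun s hs => (hF' s hs).differentiableAt.differentiableWithinAt
  · rw [interior_Ici]
    intro a ha b hb hab
    rw [(hF' a ha).deriv, (hF' b hb).deriv]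
    exact hF'mono ha hb hab
end
end

section
/- Let p ≥ 1 and m, ε, 𝔨 > 0 be fixed, and define F : [0,∞) × [0,∞) → [0,∞) by F(σ, w) = min{ ((σ+m)^p − (w+m+ε)^p)⁺, 𝔨 } / (σ+m)^{p−1}, where a⁺ = max{a, 0}. Then there exists a constant C > 0 depending only on p such that for all σ₁, σ₂, w₁, w₂ ≥ 0: |F(σ₁, w₁) − F(σ₂, w₂)| ≤ C (|σ₁ − σ₂| + |w₁ − w₂|). -/
open MeasureTheory Filter Set

noncomputable section

private lemma aux_min_sub_min {x y k : ℝ} (h : y ≤ x) : min x k - min y k ≤ x - y := by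
  rcases le_total y k with h2 | h2
  · have := min_le_left x k
    rw [min_eq_left h2]; linarith
  · have := min_le_right x k
    rw [min_eq_right h2]; linarith

/-- Tangent line (Bernoulli) bound: `y^p - x^p ≤ p y^{p-1} (y - x)` for `p ≥ 1`. -/
private lemma aux_tangent {p x y : ℝ} (hp : 1 ≤ p) (hx : 0 ≤ x) (hy : 0 < y) :
    y ^ p - x ^ p ≤ p * y ^ (p - 1) * (y - x) := by
  have hy0 : y ≠ 0 := hy.ne'
  have hs : (-1 : ℝ) ≤ x / y - 1 := by
    have : 0 ≤ x / y := div_nonneg hx hy.le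
    linarith
  have key := one_add_mul_self_le_rpow_one_add hs hp
  rw [show 1 + (x / y - 1) = x / y from by ring, Real.div_rpow hx hy.le] at key
  have hyp : (0 : ℝ) < y ^ p := Real.rpow_pos_of_pos hy p
  rw [le_div_iff₀ hyp] at key
  have h1 : y ^ p = y ^ (p - 1) * y := by
    rw [← Real.rpow_add_one hy0 (p - 1), sub_add_cancel]
  have e : (1 + p * (x / y - 1)) * y ^ p = y ^ p + p * y ^ (p - 1) * (x - y) := by
    rw [h1]; field_simp
  rw [e] at key; linarith

/-- Key log-based bound: `a₁ (a₂^q - a₁^q) ≤ q (a₂ - a₁) a₂^q` for `q ≥ 0`, `0 < a₁ ≤ a₂`. -/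
private lemma aux_key_log {q a₁ a₂ : ℝ} (hq : 0 ≤ q) (h1 : 0 < a₁) (h12 : a₁ ≤ a₂) :
    a₁ * (a₂ ^ q - a₁ ^ q) ≤ q * (a₂ - a₁) * a₂ ^ q := by
  have h2 : 0 < a₂ := h1.trans_le h12
  have hq2 : (0 : ℝ) < a₂ ^ q := Real.rpow_pos_of_pos h2 q
  have e1 : (a₁ / a₂) ^ q = Real.exp (Real.log (a₁ / a₂) * q) :=
    Real.rpow_def_of_pos (div_pos h1 h2) q
  have e2 : 1 + Real.log (a₁ / a₂) * q ≤ (a₁ / a₂) ^ q := by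
    rw [e1]; linarith [Real.add_one_le_exp (Real.log (a₁ / a₂) * q)]
  have e3 : Real.log (a₂ / a₁) ≤ a₂ / a₁ - 1 := Real.log_le_sub_one_of_pos (div_pos h2 h1)
  have e4 : Real.log (a₁ / a₂) = -Real.log (a₂ / a₁) := by
    rw [← Real.log_inv, inv_div]
  have e5 : 1 - q * (a₂ / a₁ - 1) ≤ (a₁ / a₂) ^ q := by
    have h6 := mul_le_mul_of_nonneg_left e3 hq
    rw [e4] at e2; nlinarith
  have e6 : a₁ ^ q = (a₁ / a₂) ^ q * a₂ ^ q := by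
    rw [Real.div_rpow h1.le h2.le, div_mul_cancel₀ _ hq2.ne']
  have e7 : a₁ * (a₂ / a₁ - 1) = a₂ - a₁ := by field_simp
  calc a₁ * (a₂ ^ q - a₁ ^ q) = (1 - (a₁ / a₂) ^ q) * a₂ ^ q * a₁ := by rw [e6]; ring
    _ ≤ q * (a₂ / a₁ - 1) * a₂ ^ q * a₁ := by
        apply mul_le_mul_of_nonneg_right _ h1.le
        apply mul_le_mul_of_nonneg_right _ hq2.le
        linarith
    _ = q * (a₁ * (a₂ / a₁ - 1)) * a₂ ^ q := by ring
    _ = q * (a₂ - a₁) * a₂ ^ q := by rw [e7]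

/-- Lipschitz bound in the `b` variable (numerator only). -/
private lemma aux_lipW {p a b₁ b₂ k : ℝ} (hp : 1 ≤ p) (ha : 0 < a) (hb₁ : 0 ≤ b₁)
    (hb : b₁ ≤ b₂) (hk : 0 < k) :
    |min (max (a ^ p - b₁ ^ p) 0) k - min (max (a ^ p - b₂ ^ p) 0) k|
      ≤ p * a ^ (p - 1) * (b₂ - b₁) := by
  have hp0 : (0 : ℝ) ≤ p := by linarith
  have hp1 : (0 : ℝ) ≤ p - 1 := by linarith
  have hbp : b₁ ^ p ≤ b₂ ^ p := Real.rpow_le_rpow hb₁ hb hp0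
  have hR : 0 ≤ p * a ^ (p - 1) * (b₂ - b₁) :=
    mul_nonneg (mul_nonneg hp0 (Real.rpow_nonneg ha.le _)) (by linarith)
  have hmono : min (max (a ^ p - b₂ ^ p) 0) k ≤ min (max (a ^ p - b₁ ^ p) 0) k :=
    min_le_min (max_le_max (by linarith) le_rfl) le_rfl
  rw [abs_sub_le_iff]
  refine ⟨?_, by linarith⟩
  have step1 : min (max (a ^ p - b₁ ^ p) 0) k - min (max (a ^ p - b₂ ^ p) 0) k
      ≤ max (a ^ p - b₁ ^ p) 0 - max (a ^ p - b₂ ^ p) 0 :=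
    aux_min_sub_min (max_le_max (by linarith) le_rfl)
  refine step1.trans ?_
  rcases le_total b₂ a with h2 | h2
  · -- both powers active
    have hb2p : b₂ ^ p ≤ a ^ p := Real.rpow_le_rpow (hb₁.trans hb) h2 hp0
    rw [max_eq_left (by linarith), max_eq_left (by linarith)]
    rcases (hb₁.trans hb).eq_or_lt with h4 | h4
    · have hb10 : b₁ = 0 := le_antisymm (h4 ▸ hb) hb₁
      rw [← h4, hb10]; simp
    · have t := aux_tangent hp hb₁ h4
      have hmono2 : b₂ ^ (p - 1) ≤ a ^ (p - 1) := Real.rpow_le_rpow h4.le h2 hp1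
      have h5 : p * b₂ ^ (p - 1) * (b₂ - b₁) ≤ p * a ^ (p - 1) * (b₂ - b₁) := by
        apply mul_le_mul_of_nonneg_right _ (by linarith)
        exact mul_le_mul_of_nonneg_left hmono2 hp0
      linarith
  · -- a ≤ b₂ : second max vanishes or is small
    have h0 : (0 : ℝ) ≤ max (a ^ p - b₂ ^ p) 0 := le_max_right _ _
    rcases le_total a b₁ with h3 | h3
    · have : a ^ p ≤ b₁ ^ p := Real.rpow_le_rpow ha.le h3 hp0
      rw [max_eq_right (by linarith)]
      linarith
    · have t := aux_tangent hp hb₁ ha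
      have hmax : max (a ^ p - b₁ ^ p) 0 ≤ p * a ^ (p - 1) * (a - b₁) :=
        max_le (by linarith) (by
          have := mul_nonneg (mul_nonneg hp0 (Real.rpow_nonneg ha.le (p - 1))) (by linarith : (0:ℝ) ≤ a - b₁)
          linarith)
      have hle : p * a ^ (p - 1) * (a - b₁) ≤ p * a ^ (p - 1) * (b₂ - b₁) := by
        apply mul_le_mul_of_nonneg_left (by linarith)
        exact mul_nonneg hp0 (Real.rpow_nonneg ha.le _)
      linarith

/-- Lipschitz bound in the `a` variable (ordered version). -/
private lemma aux_lipS {p b k a₁ a₂ : ℝ} (hp : 1 ≤ p) (hb : 0 ≤ b) (hk : 0 < k)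
    (h1 : 0 < a₁) (h12 : a₁ ≤ a₂) :
    |min (max (a₁ ^ p - b ^ p) 0) k / a₁ ^ (p - 1)
      - min (max (a₂ ^ p - b ^ p) 0) k / a₂ ^ (p - 1)| ≤ p * (a₂ - a₁) := by
  have h2 : 0 < a₂ := h1.trans_le h12
  have hp0 : (0 : ℝ) ≤ p := by linarith
  have hp1 : (0 : ℝ) ≤ p - 1 := by linarith
  set N₁ := min (max (a₁ ^ p - b ^ p) 0) k with hN₁
  set N₂ := min (max (a₂ ^ p - b ^ p) 0) k with hN₂
  have hd₁ : (0 : ℝ) < a₁ ^ (p - 1) := Real.rpow_pos_of_pos h1 _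
  have hd₂ : (0 : ℝ) < a₂ ^ (p - 1) := Real.rpow_pos_of_pos h2 _
  have hdle : a₁ ^ (p - 1) ≤ a₂ ^ (p - 1) := Real.rpow_le_rpow h1.le h12 hp1
  have hap : a₁ ^ p ≤ a₂ ^ p := Real.rpow_le_rpow h1.le h12 hp0
  have hN₁0 : 0 ≤ N₁ := le_min (le_max_right _ _) hk.le
  have hNle : N₁ ≤ N₂ :=
    min_le_min (max_le_max (by linarith) le_rfl) le_rfl
  have hN₁top : N₁ ≤ a₁ ^ p := by
    have hbp : (0 : ℝ) ≤ b ^ p := Real.rpow_nonneg hb _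
    have := min_le_left (max (a₁ ^ p - b ^ p) 0) k
    have := max_le (by linarith : a₁ ^ p - b ^ p ≤ a₁ ^ p)
      (Real.rpow_nonneg h1.le p)
    linarith [min_le_left (max (a₁ ^ p - b ^ p) 0) k]
  have hdiff : N₂ - N₁ ≤ a₂ ^ p - a₁ ^ p := by
    have step := aux_min_sub_min (k := k)
      (max_le_max (by linarith : a₁ ^ p - b ^ p ≤ a₂ ^ p - b ^ p) (le_refl (0:ℝ)))
    have hmax : max (a₂ ^ p - b ^ p) 0 - max (a₁ ^ p - b ^ p) 0
        ≤ a₂ ^ p - a₁ ^ p := by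
      rcases le_total (0:ℝ) (a₁ ^ p - b ^ p) with h3 | h3
      · rw [max_eq_left h3, max_eq_left (by linarith)]; linarith
      · rw [max_eq_right h3]
        rcases le_total (0:ℝ) (a₂ ^ p - b ^ p) with h4 | h4
        · rw [max_eq_left h4]; linarith
        · rw [max_eq_right h4]; linarith
    linarith
  rw [abs_sub_le_iff]
  constructor
  · -- N₁/d₁ - N₂/d₂ ≤ p (a₂ - a₁) : denominator variation
    have hstep : N₁ / a₁ ^ (p - 1) - N₂ / a₂ ^ (p - 1)
        ≤ N₁ / a₁ ^ (p - 1) - N₁ / a₂ ^ (p - 1) := by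
      have hNd : N₁ / a₂ ^ (p - 1) ≤ N₂ / a₂ ^ (p - 1) :=
        div_le_div_of_nonneg_right hNle hd₂.le
      linarith
    refine hstep.trans ?_
    have e : N₁ / a₁ ^ (p - 1) - N₁ / a₂ ^ (p - 1)
        = N₁ * (a₂ ^ (p - 1) - a₁ ^ (p - 1)) / (a₁ ^ (p - 1) * a₂ ^ (p - 1)) := by
      field_simp
    rw [e]
    have hnum : N₁ * (a₂ ^ (p - 1) - a₁ ^ (p - 1))
        ≤ a₁ ^ p * (a₂ ^ (p - 1) - a₁ ^ (p - 1)) :=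
      mul_le_mul_of_nonneg_right hN₁top (by linarith)
    have hsplit : a₁ ^ p = a₁ ^ (p - 1) * a₁ := by
      rw [← Real.rpow_add_one h1.ne' (p - 1), sub_add_cancel]
    have hkey := aux_key_log hp1 h1 h12
    -- a₁ * (a₂^(p-1) - a₁^(p-1)) ≤ (p-1) * (a₂ - a₁) * a₂^(p-1)
    have hnum2 : a₁ ^ p * (a₂ ^ (p - 1) - a₁ ^ (p - 1))
        ≤ (p - 1) * (a₂ - a₁) * a₂ ^ (p - 1) * a₁ ^ (p - 1) := by
      rw [hsplit]
      calc a₁ ^ (p - 1) * a₁ * (a₂ ^ (p - 1) - a₁ ^ (p - 1))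
          = a₁ * (a₂ ^ (p - 1) - a₁ ^ (p - 1)) * a₁ ^ (p - 1) := by ring
        _ ≤ (p - 1) * (a₂ - a₁) * a₂ ^ (p - 1) * a₁ ^ (p - 1) :=
            mul_le_mul_of_nonneg_right hkey hd₁.le
    rw [div_le_iff₀ (mul_pos hd₁ hd₂)]
    calc N₁ * (a₂ ^ (p - 1) - a₁ ^ (p - 1))
        ≤ (p - 1) * (a₂ - a₁) * a₂ ^ (p - 1) * a₁ ^ (p - 1) := le_trans hnum hnum2
      _ ≤ p * (a₂ - a₁) * (a₁ ^ (p - 1) * a₂ ^ (p - 1)) := by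
          have h5 : (p - 1) * (a₂ - a₁) ≤ p * (a₂ - a₁) :=
            mul_le_mul_of_nonneg_right (by linarith) (by linarith)
          have h6 : (0:ℝ) ≤ a₂ ^ (p - 1) * a₁ ^ (p - 1) := by positivity
          nlinarith [mul_le_mul_of_nonneg_right h5 h6]
  · -- N₂/d₂ - N₁/d₁ ≤ p (a₂ - a₁) : numerator variation
    have hstep : N₂ / a₂ ^ (p - 1) - N₁ / a₁ ^ (p - 1)
        ≤ N₂ / a₂ ^ (p - 1) - N₁ / a₂ ^ (p - 1) := by
      have : N₁ / a₂ ^ (p - 1) ≤ N₁ / a₁ ^ (p - 1) :=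
        div_le_div_of_nonneg_left hN₁0 hd₁ hdle
      linarith
    refine hstep.trans ?_
    rw [div_sub_div_same, div_le_iff₀ hd₂]
    have t := aux_tangent hp h1.le h2
    calc N₂ - N₁ ≤ a₂ ^ p - a₁ ^ p := hdiff
      _ ≤ p * a₂ ^ (p - 1) * (a₂ - a₁) := t
      _ = p * (a₂ - a₁) * a₂ ^ (p - 1) := by ring

/-- for `p ≥ 1`, the function
`F(σ,w) = min{((σ+m)^p − (w+m+ε)^p)⁺, 𝔨} / (σ+m)^{p−1}` is Lipschitz in `(σ,w)` on
`[0,∞) × [0,∞)`, with a Lipschitz constant depending only on `p` (uniformly in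
`m, ε, 𝔨 > 0`). -/
theorem truncated_test_function_lipschitz
    (p : ℝ) (hp : 1 ≤ p) :
    ∃ C : ℝ, 0 < C ∧ ∀ m ε k : ℝ, 0 < m → 0 < ε → 0 < k →
      ∀ σ₁ σ₂ w₁ w₂ : ℝ, 0 ≤ σ₁ → 0 ≤ σ₂ → 0 ≤ w₁ → 0 ≤ w₂ →
        |min (max ((σ₁ + m) ^ p - (w₁ + m + ε) ^ p) 0) k / (σ₁ + m) ^ (p - 1)
          - min (max ((σ₂ + m) ^ p - (w₂ + m + ε) ^ p) 0) k / (σ₂ + m) ^ (p - 1)|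
          ≤ C * (|σ₁ - σ₂| + |w₁ - w₂|) := by
  refine ⟨p, by linarith, ?_⟩
  intro m ε k hm hε hk σ₁ σ₂ w₁ w₂ hσ₁ hσ₂ hw₁ hw₂
  have ha₁ : 0 < σ₁ + m := by linarith
  have ha₂ : 0 < σ₂ + m := by linarith
  have hb₁ : 0 ≤ w₁ + m + ε := by linarith
  have hb₂ : 0 ≤ w₂ + m + ε := by linarith
  have hd₂ : (0 : ℝ) < (σ₂ + m) ^ (p - 1) := Real.rpow_pos_of_pos ha₂ _
  -- term 1 : vary σ with w = w₁ fixed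
  have T1 : |min (max ((σ₁ + m) ^ p - (w₁ + m + ε) ^ p) 0) k / (σ₁ + m) ^ (p - 1)
      - min (max ((σ₂ + m) ^ p - (w₁ + m + ε) ^ p) 0) k / (σ₂ + m) ^ (p - 1)|
      ≤ p * |σ₁ - σ₂| := by
    rcases le_total (σ₁ + m) (σ₂ + m) with h | h
    · have := aux_lipS hp hb₁ hk ha₁ h
      have habs : |σ₁ - σ₂| = σ₂ + m - (σ₁ + m) := by
        rw [abs_sub_comm, abs_of_nonneg (by linarith)]; ring
      rw [habs]; exact this
    · have := aux_lipS hp hb₁ hk ha₂ h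
      rw [abs_sub_comm]
      have habs : |σ₁ - σ₂| = σ₁ + m - (σ₂ + m) := by
        rw [abs_of_nonneg (by linarith)]; ring
      rw [habs]; exact this
  -- term 2 : vary w with σ = σ₂ fixed
  have T2 : |min (max ((σ₂ + m) ^ p - (w₁ + m + ε) ^ p) 0) k / (σ₂ + m) ^ (p - 1)
      - min (max ((σ₂ + m) ^ p - (w₂ + m + ε) ^ p) 0) k / (σ₂ + m) ^ (p - 1)|
      ≤ p * |w₁ - w₂| := by
    rw [div_sub_div_same, abs_div, abs_of_pos hd₂, div_le_iff₀ hd₂]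
    rcases le_total (w₁ + m + ε) (w₂ + m + ε) with h | h
    · have := aux_lipW hp ha₂ hb₁ h hk
      have habs : |w₁ - w₂| = w₂ + m + ε - (w₁ + m + ε) := by
        rw [abs_sub_comm, abs_of_nonneg (by linarith)]; ring
      rw [habs]; calc _ ≤ p * (σ₂ + m) ^ (p - 1) * (w₂ + m + ε - (w₁ + m + ε)) := this
        _ = p * (w₂ + m + ε - (w₁ + m + ε)) * (σ₂ + m) ^ (p - 1) := by ring
    · have := aux_lipW hp ha₂ hb₂ h hk
      rw [abs_sub_comm]
      have habs : |w₁ - w₂| = w₁ + m + ε - (w₂ + m + ε) := by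
        rw [abs_of_nonneg (by linarith)]; ring
      rw [habs]; calc _ ≤ p * (σ₂ + m) ^ (p - 1) * (w₁ + m + ε - (w₂ + m + ε)) := this
        _ = p * (w₁ + m + ε - (w₂ + m + ε)) * (σ₂ + m) ^ (p - 1) := by ring
  calc |min (max ((σ₁ + m) ^ p - (w₁ + m + ε) ^ p) 0) k / (σ₁ + m) ^ (p - 1)
      - min (max ((σ₂ + m) ^ p - (w₂ + m + ε) ^ p) 0) k / (σ₂ + m) ^ (p - 1)|
      ≤ |min (max ((σ₁ + m) ^ p - (w₁ + m + ε) ^ p) 0) k / (σ₁ + m) ^ (p - 1)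
        - min (max ((σ₂ + m) ^ p - (w₁ + m + ε) ^ p) 0) k / (σ₂ + m) ^ (p - 1)|
        + |min (max ((σ₂ + m) ^ p - (w₁ + m + ε) ^ p) 0) k / (σ₂ + m) ^ (p - 1)
        - min (max ((σ₂ + m) ^ p - (w₂ + m + ε) ^ p) 0) k / (σ₂ + m) ^ (p - 1)| :=
      abs_sub_le _ _ _
    _ ≤ p * |σ₁ - σ₂| + p * |w₁ - w₂| := add_le_add T1 T2
    _ = p * (|σ₁ - σ₂| + |w₁ - w₂|) := by ring
end
end
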